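/- arXiv:1009.1706 — 2 statements merged into one kernel-verified Lean document; each statement's English description precedes it below -/
import Mathlib

section
/- Let c∈(0,1), h=ck/p, b=r/(c√k), and let θ=(θ_1,…,θ_p) be random with θ_j=b ε_j, where ε_1,…,ε_p are i.i.d. taking the value 0 with probability 1−h and each of +1, −1 with probability h/2; let π be the resulting product prior on ℝ^p. If k→∞, then π({θ : θ has at most k nonzero coordinates and ‖θ‖≥r})→1. -/
/-!
Let `N` be the number of nonzero coordinates of `θ`. Its indicators are independent with mean
`h`, so `N` has mean `ph = ck` and variance at most `ck`, and Chebyshev gives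
`|N - ck| < c(1-c)k` off an event of probability at most `1 / (c(1-c)²k) → 0`. On that event
`c²k < N < k`, and since almost surely every nonzero coordinate is `±b`,
`‖θ‖² = N b² > c²k b² = r²`.
-/

open MeasureTheory ProbabilityTheory Filter
open scoped ENNReal NNReal

noncomputable section

/-- Euclidean norm of a finite vector. -/
def vnorm {m : ℕ} (v : Fin m → ℝ) : ℝ := Real.sqrt (∑ i, v i ^ 2)

open Classical in
/-- Number of nonzero coordinates of `θ`. -/
def suppCard {m : ℕ} (θ : Fin m → ℝ) : ℕ := (Finset.univ.filter fun j => θ j ≠ 0).card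

/-- Law of a single coordinate `θ_j = b ε_j`: value `0` with probability `1-h`,
and values `+b`, `-b` with probability `h/2` each. -/
def coordLaw (h b : ℝ) : Measure ℝ :=
  ENNReal.ofReal (1 - h) • Measure.dirac 0 +
    ENNReal.ofReal (h / 2) • Measure.dirac b +
      ENNReal.ofReal (h / 2) • Measure.dirac (-b)

/-- The product prior `π = Π_j π_j` on `ℝ^p`. -/
def priorPi (p : ℕ) (h b : ℝ) : Measure (Fin p → ℝ) :=
  Measure.pi fun _ : Fin p => coordLaw h b

open Set Topology

section IndicatorCount

variable {ι α : Type*} [Fintype ι] [MeasurableSpace α] {μ : ι → Measure α}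
  [∀ i, IsProbabilityMeasure (μ i)] {s : ι → Set α}

/-- The indicators are independent and each has variance at most its mean, so the variance of
the count is at most its mean. -/
lemma measure_abs_sum_indicator_sub_ge_le (hs : ∀ i, MeasurableSet (s i)) {t : ℝ} (ht : 0 < t) :
    Measure.pi μ {θ | t ≤ |∑ i, (s i).indicator (1 : α → ℝ) (θ i) - ∑ i, (μ i).real (s i)|}
      ≤ ENNReal.ofReal ((∑ i, (μ i).real (s i)) / t ^ 2) := by
  set X : ι → (ι → α) → ℝ := fun i θ => (s i).indicator 1 (θ i) with hX
  have hXm : ∀ i, Measurable (X i) := fun i =>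
    (measurable_one.indicator (hs i)).comp (measurable_pi_apply i)
  have hX2 : ∀ i, MemLp (X i) 2 (Measure.pi μ) := fun i =>
    MemLp.of_bound (hXm i).aestronglyMeasurable 1 (Eventually.of_forall fun θ => by
      by_cases hθ : θ i ∈ s i <;> simp [hX, hθ])
  have hmean : ∀ i, ∫ θ, X i θ ∂Measure.pi μ = (μ i).real (s i) := fun i => by
    rw [integral_comp_eval (μ := μ) (measurable_one.indicator (hs i)).aestronglyMeasurable,
      integral_indicator_one (hs i)]
  have hvar : ∀ i, variance (X i) (Measure.pi μ) ≤ (μ i).real (s i) := fun i => by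
    have hsq : ∀ θ, X i θ ^ 2 = X i θ := fun θ => by
      by_cases hθ : θ i ∈ s i <;> simp [hX, hθ]
    simpa only [Pi.pow_apply, hsq, hmean i] using
      variance_le_expectation_sq (μ := Measure.pi μ) (hXm i).aestronglyMeasurable
  have hindep : iIndepFun X (Measure.pi μ) :=
    iIndepFun_pi fun i => (measurable_one.indicator (hs i)).aemeasurable
  have hsum_var : variance (∑ i, X i) (Measure.pi μ) ≤ ∑ i, (μ i).real (s i) := by
    rw [IndepFun.variance_sum (fun i _ => hX2 i) fun i _ j _ hij => hindep.indepFun hij]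
    exact Finset.sum_le_sum fun i _ => hvar i
  have hsum_mean : ∫ θ, (∑ i, X i) θ ∂Measure.pi μ = ∑ i, (μ i).real (s i) := by
    simp only [Finset.sum_apply]
    rw [integral_finsetSum _ fun i _ => (hX2 i).integrable one_le_two]
    exact Finset.sum_congr rfl fun i _ => hmean i
  calc _ = Measure.pi μ {θ | t ≤ |(∑ i, X i) θ - ∫ θ, (∑ i, X i) θ ∂Measure.pi μ|} := by
        rw [hsum_mean]; simp only [Finset.sum_apply, hX]
    _ ≤ ENNReal.ofReal (variance (∑ i, X i) (Measure.pi μ) / t ^ 2) :=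
        meas_ge_le_variance_div_sq (memLp_finsetSum' _ fun i _ => hX2 i) ht
    _ ≤ _ := by gcongr

end IndicatorCount

section coordLaw

variable {h b : ℝ}

lemma coordLaw_apply (s : Set ℝ) :
    coordLaw h b s = ENNReal.ofReal (1 - h) * s.indicator 1 0 +
      ENNReal.ofReal (h / 2) * s.indicator 1 b + ENNReal.ofReal (h / 2) * s.indicator 1 (-b) := by
  simp [coordLaw, Measure.dirac_apply]

lemma isProbabilityMeasure_coordLaw (h0 : 0 ≤ h) (h1 : h ≤ 1) :
    IsProbabilityMeasure (coordLaw h b) := by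
  constructor
  rw [coordLaw_apply, ← ENNReal.ofReal_one]
  simp only [indicator_univ, Pi.one_apply, mul_one]
  rw [← ENNReal.ofReal_add (by linarith) (by linarith),
    ← ENNReal.ofReal_add (by linarith) (by linarith)]
  ring_nf

lemma coordLaw_real_ne_zero (h0 : 0 ≤ h) (hb : b ≠ 0) : (coordLaw h b).real {x | x ≠ 0} = h := by
  rw [measureReal_def, coordLaw_apply]
  simp only [indicator, mem_ofPred_eq, ne_eq, not_true_eq_false, if_false, hb, neg_eq_zero,
    not_false_eq_true, if_true, Pi.one_apply, mul_zero, mul_one, zero_add]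
  rw [← ENNReal.ofReal_add (by linarith) (by linarith), add_halves, ENNReal.toReal_ofReal h0]

lemma ae_coordLaw : ∀ᵐ x ∂coordLaw h b, x = 0 ∨ x ^ 2 = b ^ 2 := by
  rw [ae_iff, coordLaw_apply]
  simp [indicator]

end coordLaw

section priorPi

variable {p : ℕ} {h b : ℝ}

lemma isProbabilityMeasure_priorPi (h0 : 0 ≤ h) (h1 : h ≤ 1) :
    IsProbabilityMeasure (priorPi p h b) :=
  have := isProbabilityMeasure_coordLaw (b := b) h0 h1
  inferInstanceAs (IsProbabilityMeasure (Measure.pi _))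

lemma ae_priorPi (h0 : 0 ≤ h) (h1 : h ≤ 1) :
    ∀ᵐ θ ∂priorPi p h b, ∀ j, θ j = 0 ∨ θ j ^ 2 = b ^ 2 := by
  have := isProbabilityMeasure_coordLaw (b := b) h0 h1
  exact ae_all_iff.2 fun j =>
    (Measure.tendsto_eval_ae_ae (μ := fun _ : Fin p => coordLaw h b) (i := j)).eventually
      ae_coordLaw

end priorPi

section Support

variable {m : ℕ} {θ : Fin m → ℝ}

lemma suppCard_eq_sum_indicator :
    (suppCard θ : ℝ) = ∑ j, {x : ℝ | x ≠ 0}.indicator 1 (θ j) := by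
  classical
  simp [suppCard, Finset.card_filter, indicator]

lemma sum_sq_eq_suppCard_mul_sq {b : ℝ} (hθ : ∀ j, θ j = 0 ∨ θ j ^ 2 = b ^ 2) :
    ∑ j, θ j ^ 2 = suppCard θ * b ^ 2 := by
  rw [suppCard_eq_sum_indicator, Finset.sum_mul]
  refine Finset.sum_congr rfl fun j _ => ?_
  by_cases hj0 : θ j = 0
  · simp [hj0]
  · simp [hj0, (hθ j).resolve_left hj0]

end Support

/-- The deviation bound puts the count in `(c²k, (2c - c²)k)`, and `2c - c² ≤ 1`. -/
lemma suppCard_le_and_le_vnorm {m k : ℕ} {θ : Fin m → ℝ} {b c r : ℝ}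
    (hθ : ∀ j, θ j = 0 ∨ θ j ^ 2 = b ^ 2) (hr : r ^ 2 ≤ c ^ 2 * k * b ^ 2)
    (hdev : |(suppCard θ : ℝ) - c * k| < c * (1 - c) * k) :
    suppCard θ ≤ k ∧ r ≤ vnorm θ := by
  obtain ⟨hlow, hupp⟩ := abs_lt.1 hdev
  refine ⟨?_, ?_⟩
  · have hk : (0 : ℝ) ≤ k := Nat.cast_nonneg k
    have : (suppCard θ : ℝ) < k := by nlinarith [sq_nonneg (1 - c)]
    exact_mod_cast this.le
  · have hN : c ^ 2 * k ≤ suppCard θ := by linarith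
    calc r ≤ |r| := le_abs_self r
      _ = Real.sqrt (r ^ 2) := (Real.sqrt_sq_eq_abs r).symm
      _ ≤ vnorm θ := Real.sqrt_le_sqrt (by
          rw [sum_sq_eq_suppCard_mul_sq hθ]; nlinarith [sq_nonneg b])

lemma mul_div_le_one_of_le {k p : ℕ} (hkp : k ≤ p) {c : ℝ} (hc1 : c ≤ 1) : c * k / p ≤ 1 := by
  refine div_le_one_of_le₀ ?_ (Nat.cast_nonneg p)
  calc c * k ≤ k := mul_le_of_le_one_left (Nat.cast_nonneg k) hc1
    _ ≤ p := by exact_mod_cast hkp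

lemma priorPi_real_compl_le {k p : ℕ} (hk : 0 < k) (hkp : k ≤ p) {c r : ℝ} (hc0 : 0 < c)
    (hc1 : c < 1) (hr : r ≠ 0) :
    (priorPi p (c * k / p) (r / (c * Real.sqrt k))).real
        {θ | suppCard θ ≤ k ∧ r ≤ vnorm θ}ᶜ ≤ (c * (1 - c) ^ 2)⁻¹ / k := by
  set h := c * k / p
  set b := r / (c * Real.sqrt k)
  have hkR : (0 : ℝ) < k := by exact_mod_cast hk
  have h0 : 0 ≤ h := by positivity
  have h1 : h ≤ 1 := mul_div_le_one_of_le hkp hc1.le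
  have := isProbabilityMeasure_coordLaw (b := b) h0 h1
  have hb : b ≠ 0 := div_ne_zero hr (by positivity)
  have hrb : r ^ 2 = c ^ 2 * k * b ^ 2 := by
    simp only [b, div_pow, mul_pow, Real.sq_sqrt hkR.le]
    field_simp
  have hp : (p : ℝ) ≠ 0 := Nat.cast_ne_zero.2 (hk.trans_le hkp).ne'
  have hmean : ∑ _j : Fin p, (coordLaw h b).real {x | x ≠ 0} = c * k := by
    simp only [coordLaw_real_ne_zero h0 hb, Finset.sum_const, Finset.card_univ, Fintype.card_fin,
      nsmul_eq_mul, h]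
    field_simp
  have hc1' : 0 < 1 - c := by linarith
  have ht : 0 < c * (1 - c) * k := by positivity
  have hcheb := measure_abs_sum_indicator_sub_ge_le (μ := fun _ : Fin p => coordLaw h b)
    (s := fun _ => {x | x ≠ 0}) (fun _ => measurableSet_eq.compl) ht
  rw [hmean] at hcheb
  have hbad : {θ | suppCard θ ≤ k ∧ r ≤ vnorm θ}ᶜ ≤ᵐ[priorPi p h b]
      {θ | c * (1 - c) * k ≤ |∑ j, {x : ℝ | x ≠ 0}.indicator 1 (θ j) - c * k|} := by
    filter_upwards [ae_priorPi h0 h1] with θ hθ hnot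
    by_contra hdev
    refine hnot (suppCard_le_and_le_vnorm hθ hrb.le ?_)
    rw [suppCard_eq_sum_indicator]
    exact not_le.1 hdev
  calc _ ≤ c * k / (c * (1 - c) * k) ^ 2 :=
        ENNReal.toReal_le_of_le_ofReal (by positivity) ((measure_mono_ae hbad).trans hcheb)
    _ = (c * (1 - c) ^ 2)⁻¹ / k := by field_simp

/-- **Lemma (the prior concentrates on the alternative).** With `h = ck/p` and
`b = r/(c√k)`, if `k → ∞` then `π(θ ∈ ℝ^p_k, ‖θ‖ ≥ r) → 1`. -/
theorem prior_concentration
    (k p : ℕ → ℕ) (hk : Tendsto k atTop atTop) (hkp : ∀ ν, k ν ≤ p ν)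
    (c : ℝ) (hc0 : 0 < c) (hc1 : c < 1)
    (r : ℕ → ℝ) (hr : ∀ ν, 0 < r ν) :
    Tendsto (fun ν =>
        (priorPi (p ν) (c * (k ν : ℝ) / (p ν : ℝ)) (r ν / (c * Real.sqrt (k ν)))
          {θ | suppCard θ ≤ k ν ∧ r ν ≤ vnorm θ}).toReal)
      atTop (nhds 1) := by
  set π := fun ν => priorPi (p ν) (c * (k ν : ℝ) / (p ν : ℝ)) (r ν / (c * Real.sqrt (k ν)))
  set E := fun ν => {θ : Fin (p ν) → ℝ | suppCard θ ≤ k ν ∧ r ν ≤ vnorm θ}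
  have hprob : ∀ ν, IsProbabilityMeasure (π ν) := fun ν =>
    isProbabilityMeasure_priorPi (by positivity) (mul_div_le_one_of_le (hkp ν) hc1.le)
  have hcompl : Tendsto (fun ν => (π ν).real (E ν)ᶜ) atTop (𝓝 0) :=
    squeeze_zero' (Eventually.of_forall fun ν => measureReal_nonneg)
      ((hk.eventually_gt_atTop 0).mono fun ν hν =>
        priorPi_real_compl_le hν (hkp ν) hc0 hc1 (hr ν).ne')
      ((tendsto_const_div_atTop_nhds_zero_nat _).comp hk)
  refine tendsto_of_tendsto_of_tendsto_of_le_of_le (by simpa using hcompl.const_sub 1)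
    tendsto_const_nhds (fun ν => ?_) fun ν => measureReal_le_one
  have := measureReal_union_le (μ := π ν) (E ν) (E ν)ᶜ
  rw [union_compl_self, probReal_univ] at this
  exact sub_le_iff_le_add.2 this
end
end

section
/- Let f:[0,R]→ℝ, t_0∈[0,R], and suppose there exists λ>0 such that inf_{t∈[0,R]}(f(t)−λt²) = f(t_0)−λt_0². Then the constrained minimum F_k(t_0) = inf{ Σ_{j=1}^k f(t_j) : t_j∈[0,R] for all j, Σ_{j=1}^k t_j² ≥ k t_0² } equals k·f(t_0). -/
/-! On `[0, R]`, `f t ≥ f t₀ + λ (t² - t₀²)`; summing over the tuple, the constraint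
`Σ t_j² ≥ k t₀²` and `λ ≥ 0` give `Σ f(t_j) ≥ k f(t₀)`, and the constant tuple `t₀` attains it. -/

theorem card_mul_le_sum_of_isMinOn_sub_mul_sq {ι : Type*} [Fintype ι] {f : ℝ → ℝ}
    {S : Set ℝ} {t₀ lam : ℝ} (hlam : 0 ≤ lam)
    (hmin : IsMinOn (fun t => f t - lam * t ^ 2) S t₀)
    {t : ι → ℝ} (ht : ∀ j, t j ∈ S) (hconstr : (Fintype.card ι : ℝ) * t₀ ^ 2 ≤ ∑ j, t j ^ 2) :
    (Fintype.card ι : ℝ) * f t₀ ≤ ∑ j, f (t j) := by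
  have hsum : ∑ j, (f t₀ - lam * t₀ ^ 2 + lam * t j ^ 2) ≤ ∑ j, f (t j) :=
    Finset.sum_le_sum fun j _ => by linarith [isMinOn_iff.mp hmin (t j) (ht j)]
  rw [Finset.sum_add_distrib, Finset.sum_const, ← Finset.mul_sum, Finset.card_univ,
    nsmul_eq_mul] at hsum
  nlinarith [mul_le_mul_of_nonneg_left hconstr hlam]

theorem constrained_minimization_general
    (k : ℕ) (R : ℝ)
    (f : ℝ → ℝ) (t₀ : ℝ) (ht₀ : t₀ ∈ Set.Icc (0 : ℝ) R)
    (lam : ℝ) (hlam : 0 < lam)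
    (hmin : IsLeast ((fun t => f t - lam * t ^ 2) '' Set.Icc (0 : ℝ) R)
      (f t₀ - lam * t₀ ^ 2)) :
    sInf {s : ℝ | ∃ t : Fin k → ℝ, (∀ j, t j ∈ Set.Icc (0 : ℝ) R) ∧
        (k : ℝ) * t₀ ^ 2 ≤ (∑ j, t j ^ 2) ∧ s = ∑ j, f (t j)} =
      (k : ℝ) * f t₀ := by
  refine IsLeast.csInf_eq ⟨⟨fun _ => t₀, fun _ => ht₀, by simp, by simp⟩, ?_⟩
  rintro s ⟨t, ht, hconstr, rfl⟩
  simpa using card_mul_le_sum_of_isMinOn_sub_mul_sq hlam.le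
    (isMinOn_iff.mpr fun u hu => hmin.2 (Set.mem_image_of_mem _ hu)) ht (by simpa using hconstr)

/-- **Lemma (a minimization problem).** If there is `λ > 0` such that
`inf_{t ∈ [0,R]} (f(t) - λ t²) = f(t₀) - λ t₀²`, then the constrained minimum
`F_k(t₀) = inf { Σ_{j=1}^k f(t_j) : t_j ∈ [0,R], Σ_j t_j² ≥ k t₀² }` equals `k f(t₀)`. -/
theorem constrained_minimization
    (k : ℕ) (hk : 0 < k) (R : ℝ) (hR : 0 < R)
    (f : ℝ → ℝ) (t₀ : ℝ) (ht₀ : t₀ ∈ Set.Icc (0 : ℝ) R)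
    (lam : ℝ) (hlam : 0 < lam)
    (hmin : IsLeast ((fun t => f t - lam * t ^ 2) '' Set.Icc (0 : ℝ) R)
      (f t₀ - lam * t₀ ^ 2)) :
    sInf {s : ℝ | ∃ t : Fin k → ℝ, (∀ j, t j ∈ Set.Icc (0 : ℝ) R) ∧
        (k : ℝ) * t₀ ^ 2 ≤ (∑ j, t j ^ 2) ∧ s = ∑ j, f (t j)} =
      (k : ℝ) * f t₀ :=
  constrained_minimization_general k R f t₀ ht₀ lam hlam hmin
end
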